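/- arXiv:1707.00281 — 3 statements merged into one kernel-verified Lean document; each statement's English description precedes it below -/
import Mathlib

section
/- Let A ∈ ℝ^{m×n} and let A = P D Qᵀ be a singular value decomposition of A, where P ∈ ℝ^{m×m} and Q ∈ ℝ^{n×n} are orthogonal and D ∈ ℝ^{m×n} is diagonal with non-increasing nonnegative diagonal entries. For r ≥ 0 let D_r be obtained from D by keeping the r largest diagonal entries and replacing the remaining diagonal entries by 0, and set H_r(A) := P D_r Qᵀ. Then rank(H_r(A)) ≤ r, and for every matrix B ∈ ℝ^{m×n} with rank(B) ≤ r one has ‖A − H_r(A)‖_F ≤ ‖A − B‖_F (Eckart–Young theorem for the Frobenius norm: the hard-thresholded SVD solves the unconstrained low-rank approximation problem (3)). -/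
open Matrix

/-- Frobenius norm of a real matrix. -/
noncomputable def frobNorm {m n : ℕ} (A : Matrix (Fin m) (Fin n) ℝ) : ℝ :=
  Real.sqrt (∑ i, ∑ j, (A i j) ^ 2)

/-- Column space of a matrix, as a subspace of Euclidean space. -/
noncomputable def colSpace {m k : ℕ} (A : Matrix (Fin m) (Fin k) ℝ) :
    Submodule ℝ (EuclideanSpace ℝ (Fin m)) :=
  LinearMap.range (Matrix.toEuclideanLin A)

/-- `P_{A₁}`: orthogonal projection onto the column space of `A₁`, applied columnwise. -/
noncomputable def projCols {m k l : ℕ} (A₁ : Matrix (Fin m) (Fin k) ℝ)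
    (B : Matrix (Fin m) (Fin l) ℝ) : Matrix (Fin m) (Fin l) ℝ :=
  Matrix.of fun i j =>
    ((colSpace A₁).orthogonalProjectionOnto (WithLp.toLp 2 (fun i' => B i' j)) : EuclideanSpace ℝ (Fin m)) i

/-- `P⊥_{A₁}`: orthogonal projection onto the orthogonal complement of the column
space of `A₁`, applied columnwise. -/
noncomputable def projOrthCols {m k l : ℕ} (A₁ : Matrix (Fin m) (Fin k) ℝ)
    (B : Matrix (Fin m) (Fin l) ℝ) : Matrix (Fin m) (Fin l) ℝ :=
  Matrix.of fun i j =>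
    ((colSpace A₁)ᗮ.orthogonalProjectionOnto (WithLp.toLp 2 (fun i' => B i' j)) : EuclideanSpace ℝ (Fin m)) i

/-! By orthogonal invariance of the Frobenius norm it suffices to treat `A = D`. Write
`σᵢ² = ∑ⱼ Dᵢⱼ²` for the squared norm of row `i` of `D` (zero when `i ≥ n`). If `rank B ≤ r`, the
columns of `B` lie in a subspace `K` of dimension at most `r`, and since every column of `D` is a
multiple of a standard basis vector `eᵢ`, distance to `K` column by column gives
`‖D - B‖_F² ≥ ∑ᵢ σᵢ² ‖P_{K⊥} eᵢ‖² = ∑ᵢ σᵢ² (1 - tᵢ)` with `tᵢ = ‖P_K eᵢ‖² ∈ [0, 1]` and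
`∑ᵢ tᵢ = dim K ≤ r`. As the `σᵢ` decrease, such a weighted sum is at least `∑_{i ≥ r} σᵢ²`,
which is `‖D - D_r‖_F²`. -/

open Finset
open scoped RealInnerProductSpace

theorem sum_filter_le_sum_mul_one_sub_of_antitone {m r : ℕ} {f t : Fin m → ℝ} (hf0 : 0 ≤ f)
    (hf : Antitone f) (ht0 : 0 ≤ t) (ht1 : t ≤ 1) (ht : ∑ i, t i ≤ r) :
    ∑ i : Fin m with r ≤ i.val, f i ≤ ∑ i, f i * (1 - t i) := by
  rcases le_or_gt m r with hmr | hrm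
  · have hempty : ∑ i : Fin m with r ≤ i.val, f i = 0 :=
      sum_eq_zero fun i hi => absurd (mem_filter.1 hi).2 (by omega)
    rw [hempty]
    exact sum_nonneg fun i _ => mul_nonneg (hf0 i) (sub_nonneg.2 (ht1 i))
  -- Compare every term with the `r`-th value `c` of `f`: it dominates the tail and is
  -- dominated by the head.
  set c := f ⟨r, hrm⟩
  have hterm : ∀ i : Fin m, c * ((if (i : ℕ) < r then 1 else 0) - t i) ≤
      f i * (1 - t i) - if r ≤ (i : ℕ) then f i else 0 := by
    intro i
    by_cases hi : (i : ℕ) < r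
    · have : c ≤ f i := hf (Fin.le_iff_val_le_val.2 hi.le)
      rw [if_pos hi, if_neg (by omega), sub_zero]
      exact mul_le_mul_of_nonneg_right this (sub_nonneg.2 (ht1 i))
    · have : f i ≤ c := hf (Fin.le_iff_val_le_val.2 (by simpa using hi))
      rw [if_neg hi, if_pos (by omega)]
      nlinarith [mul_le_mul_of_nonneg_right this (ht0 i)]
  have hcount : ∑ i : Fin m, (if (i : ℕ) < r then (1 : ℝ) else 0) = r := by
    simp [sum_boole, Fin.card_filter_val_lt, hrm.le]
  have hc : 0 ≤ c * (r - ∑ i, t i) := mul_nonneg (hf0 _) (sub_nonneg.2 ht)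
  have hsum := sum_le_sum fun i (_ : i ∈ univ) => hterm i
  rw [← mul_sum, sum_sub_distrib, hcount, sum_sub_distrib, ← sum_filter] at hsum
  linarith

section Projection

variable {E : Type*} [NormedAddCommGroup E] [InnerProductSpace ℝ E]

theorem norm_starProjection_orthogonal_le_norm_sub (K : Submodule ℝ E)
    [K.HasOrthogonalProjection] {x : E} (hx : x ∈ K) (y : E) :
    ‖Kᗮ.starProjection y‖ ≤ ‖y - x‖ := by
  have hx' : Kᗮ.starProjection x = 0 :=
    (Kᗮ.starProjection_apply_eq_zero_iff).2 (K.le_orthogonal_orthogonal hx)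
  calc ‖Kᗮ.starProjection y‖ = ‖Kᗮ.starProjection (y - x)‖ := by rw [map_sub, hx', sub_zero]
    _ ≤ ‖y - x‖ := Kᗮ.norm_starProjection_apply_le _

theorem sum_norm_sq_starProjection_orthonormalBasis {ι : Type*} [Fintype ι] (K : Submodule ℝ E)
    [FiniteDimensional ℝ K] (e : OrthonormalBasis ι ℝ E) :
    ∑ i, ‖K.starProjection (e i)‖ ^ 2 = Module.finrank ℝ K := by
  let b := stdOrthonormalBasis ℝ K
  have hproj : ∀ x : E, ‖K.starProjection x‖ ^ 2 = ∑ k, ⟪(b k : E), x⟫ ^ 2 := fun x => by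
    rw [K.starProjection_apply, ← Submodule.coe_norm, ← b.sum_sq_inner_right]
    simp only [K.inner_orthogonalProjectionOnto_eq_of_mem_left]
  calc ∑ i, ‖K.starProjection (e i)‖ ^ 2 = ∑ k, ∑ i, ⟪(b k : E), e i⟫ ^ 2 := by
        simp only [hproj]; exact sum_comm
    _ = ∑ k, ‖(b k : E)‖ ^ 2 := sum_congr rfl fun k _ => e.sum_sq_inner_left _
    _ = Module.finrank ℝ K := by
      simp only [← Submodule.coe_norm, b.norm_eq_one, one_pow, sum_const, card_univ,
        Fintype.card_fin, nsmul_eq_mul, mul_one]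

theorem norm_sq_sum_smul_of_mul_eq_zero {ι : Type*} [Fintype ι] (c : ι → ℝ) (u : ι → E)
    (hc : ∀ i i', i ≠ i' → c i * c i' = 0) :
    ‖∑ i, c i • u i‖ ^ 2 = ∑ i, c i ^ 2 * ‖u i‖ ^ 2 := by
  rw [← real_inner_self_eq_norm_sq, sum_inner]
  refine sum_congr rfl fun i _ => ?_
  rw [inner_sum, sum_eq_single i (fun i' _ hi' => by
    rw [real_inner_smul_left, real_inner_smul_right, ← mul_assoc, hc i i' hi'.symm, zero_mul])
    (by simp), real_inner_smul_left, real_inner_smul_right, real_inner_self_eq_norm_sq]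
  ring

end Projection

section Matrices

variable {m n : ℕ}

def truncRows {α : Type*} [Zero α] (r : ℕ) (M : Matrix (Fin m) (Fin n) α) :
    Matrix (Fin m) (Fin n) α :=
  of fun i j => if (i : ℕ) < r then M i j else 0

theorem rank_truncRows_le {R : Type*} [Field R] (r : ℕ) (M : Matrix (Fin m) (Fin n) R) :
    (truncRows r M).rank ≤ r := by
  classical
  let w : Fin m → R := fun i => if (i : ℕ) < r then 1 else 0
  have hfac : truncRows r M = diagonal w * M := by
    ext i j
    by_cases hi : (i : ℕ) < r <;> simp [truncRows, w, diagonal_mul, hi]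
  calc (truncRows r M).rank ≤ (diagonal w).rank := hfac ▸ rank_mul_le_left _ _
    _ = Fintype.card {i // w i ≠ 0} := rank_diagonal w
    _ ≤ Fintype.card (Fin r) := Fintype.card_le_of_injective
        (fun i => ⟨i.1, by by_contra h; exact i.2 (by simp [w, h])⟩)
        fun i i' h => Subtype.ext (Fin.ext (Fin.mk.inj h))
    _ = r := Fintype.card_fin r

theorem sum_sq_sub_truncRows (r : ℕ) (M : Matrix (Fin m) (Fin n) ℝ) :
    ∑ i, ∑ j, (M - truncRows r M) i j ^ 2 = ∑ i : Fin m with r ≤ i.val, ∑ j, M i j ^ 2 := by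
  rw [sum_filter]
  refine sum_congr rfl fun i _ => ?_
  by_cases hi : (i : ℕ) < r <;> simp [truncRows, hi]

theorem sum_sq_eq_trace_mul_transpose (A : Matrix (Fin m) (Fin n) ℝ) :
    ∑ i, ∑ j, A i j ^ 2 = (A * Aᵀ).trace := by
  simp [trace, mul_apply, sq]

theorem frobNorm_orthogonal_mul {P : Matrix (Fin m) (Fin m) ℝ}
    (hP : P ∈ orthogonalGroup (Fin m) ℝ) (M : Matrix (Fin m) (Fin n) ℝ) :
    frobNorm (P * M) = frobNorm M := by
  have hP' : Pᵀ * P = 1 := (mem_orthogonalGroup_iff' _ _).1 hP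
  simp only [frobNorm, sum_sq_eq_trace_mul_transpose, transpose_mul]
  rw [Matrix.mul_assoc, trace_mul_comm]
  simp only [Matrix.mul_assoc, hP', Matrix.mul_one]

theorem frobNorm_mul_orthogonal {Q : Matrix (Fin n) (Fin n) ℝ}
    (hQ : Q ∈ orthogonalGroup (Fin n) ℝ) (M : Matrix (Fin m) (Fin n) ℝ) :
    frobNorm (M * Q) = frobNorm M := by
  have hQ' : Q * Qᵀ = 1 := (mem_orthogonalGroup_iff _ _).1 hQ
  simp only [frobNorm, sum_sq_eq_trace_mul_transpose, transpose_mul, Matrix.mul_assoc]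
  rw [← Matrix.mul_assoc Q, hQ', Matrix.one_mul]

theorem sum_sq_eq_sum_norm_sq_col (A : Matrix (Fin m) (Fin n) ℝ) :
    ∑ i, ∑ j, A i j ^ 2 = ∑ j, ‖WithLp.toLp 2 (A.col j)‖ ^ 2 := by
  simp [EuclideanSpace.norm_sq_eq, sum_comm (γ := Fin n)]

theorem col_mem_colSpace (A : Matrix (Fin m) (Fin n) ℝ) (j : Fin n) :
    WithLp.toLp 2 (A.col j) ∈ colSpace A :=
  ⟨EuclideanSpace.single j 1, by simp [toLpLin_apply]⟩

theorem finrank_colSpace (A : Matrix (Fin m) (Fin n) ℝ) :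
    Module.finrank ℝ (colSpace A) = A.rank := by
  rw [colSpace, toEuclideanLin_eq_toLin_orthonormal, ← rank_eq_finrank_range_toLin]

end Matrices

section Diagonal

variable {m n : ℕ} {D : Matrix (Fin m) (Fin n) ℝ}

theorem norm_sq_map_col_of_diag
    (hdiag : ∀ (i : Fin m) (j : Fin n), (i : ℕ) ≠ (j : ℕ) → D i j = 0)
    {F : Type*} [NormedAddCommGroup F] [InnerProductSpace ℝ F]
    (T : EuclideanSpace ℝ (Fin m) →L[ℝ] F) (j : Fin n) :
    ‖T (WithLp.toLp 2 (D.col j))‖ ^ 2 =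
      ∑ i, D i j ^ 2 * ‖T (EuclideanSpace.basisFun (Fin m) ℝ i)‖ ^ 2 := by
  have hcol : WithLp.toLp 2 (D.col j) = ∑ i, D i j • EuclideanSpace.basisFun (Fin m) ℝ i := by
    simpa using ((EuclideanSpace.basisFun (Fin m) ℝ).sum_repr (WithLp.toLp 2 (D.col j))).symm
  rw [hcol, map_sum]
  simp only [map_smul]
  refine norm_sq_sum_smul_of_mul_eq_zero _ _ fun i i' hii' => ?_
  by_cases hi : (i : ℕ) = j
  · rw [hdiag i' j fun hi' => hii' (Fin.ext (hi.trans hi'.symm)), mul_zero]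
  · rw [hdiag i j hi, zero_mul]

theorem antitone_sum_sq_row_of_diag
    (hdiag : ∀ (i : Fin m) (j : Fin n), (i : ℕ) ≠ (j : ℕ) → D i j = 0)
    (hnonneg : ∀ (i : Fin m) (j : Fin n), 0 ≤ D i j)
    (hmono : ∀ (i i' : Fin m) (j j' : Fin n),
      (i : ℕ) = (j : ℕ) → (i' : ℕ) = (j' : ℕ) → (i : ℕ) ≤ (i' : ℕ) → D i' j' ≤ D i j) :
    Antitone fun i => ∑ j, D i j ^ 2 := by
  have hrow : ∀ (i : Fin m) (j : Fin n), (i : ℕ) = j → ∑ j', D i j' ^ 2 = D i j ^ 2 :=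
    fun i j hij => sum_eq_single j (fun j' _ hj' => by
      rw [hdiag i j' fun h => hj' (Fin.ext (h.symm.trans hij)), zero_pow two_ne_zero])
      (by simp)
  intro i i' hii'
  by_cases hi' : (i' : ℕ) < n
  · have hi : (i : ℕ) < n := lt_of_le_of_lt hii' hi'
    simp only [hrow i ⟨i, hi⟩ rfl, hrow i' ⟨i', hi'⟩ rfl]
    exact pow_le_pow_left₀ (hnonneg _ _) (hmono _ _ _ _ rfl rfl hii') 2
  · have hzero : ∑ j, D i' j ^ 2 = 0 :=
      sum_eq_zero fun j _ => by rw [hdiag i' j (by omega), zero_pow two_ne_zero]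
    simp only [hzero]
    positivity

theorem frobNorm_sub_truncRows_le_of_rank_le
    (hdiag : ∀ (i : Fin m) (j : Fin n), (i : ℕ) ≠ (j : ℕ) → D i j = 0)
    (hnonneg : ∀ (i : Fin m) (j : Fin n), 0 ≤ D i j)
    (hmono : ∀ (i i' : Fin m) (j j' : Fin n),
      (i : ℕ) = (j : ℕ) → (i' : ℕ) = (j' : ℕ) → (i : ℕ) ≤ (i' : ℕ) → D i' j' ≤ D i j)
    {r : ℕ} {B : Matrix (Fin m) (Fin n) ℝ} (hB : B.rank ≤ r) :
    frobNorm (D - truncRows r D) ≤ frobNorm (D - B) := by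
  set K := colSpace B
  let e := EuclideanSpace.basisFun (Fin m) ℝ
  set t : Fin m → ℝ := fun i => ‖K.starProjection (e i)‖ ^ 2
  have hperp : ∀ i, ‖Kᗮ.starProjection (e i)‖ ^ 2 = 1 - t i := fun i => by
    rw [eq_sub_iff_add_eq', ← K.norm_sq_eq_add_norm_sq_starProjection, e.norm_eq_one, one_pow]
  have ht1 : t ≤ 1 := fun i => sub_nonneg.1 (hperp i ▸ sq_nonneg _)
  have ht : ∑ i, t i ≤ r := by
    rw [sum_norm_sq_starProjection_orthonormalBasis K e, finrank_colSpace]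
    exact_mod_cast hB
  apply Real.sqrt_le_sqrt
  calc ∑ i, ∑ j, (D - truncRows r D) i j ^ 2 = ∑ i : Fin m with r ≤ i.val, ∑ j, D i j ^ 2 :=
        sum_sq_sub_truncRows r D
    _ ≤ ∑ i, (∑ j, D i j ^ 2) * (1 - t i) :=
        sum_filter_le_sum_mul_one_sub_of_antitone (fun i => by positivity)
          (antitone_sum_sq_row_of_diag hdiag hnonneg hmono) (fun i => by positivity) ht1 ht
    _ = ∑ j, ‖Kᗮ.starProjection (WithLp.toLp 2 (D.col j))‖ ^ 2 := by
        simp only [norm_sq_map_col_of_diag hdiag, ← hperp, sum_mul]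
        exact sum_comm
    _ ≤ ∑ j, ‖WithLp.toLp 2 (D.col j) - WithLp.toLp 2 (B.col j)‖ ^ 2 :=
        sum_le_sum fun j _ => pow_le_pow_left₀ (norm_nonneg _)
          (norm_starProjection_orthogonal_le_norm_sub K (col_mem_colSpace B j) _) 2
    _ = ∑ i, ∑ j, (D - B) i j ^ 2 := by
        rw [sum_sq_eq_sum_norm_sq_col]
        rfl

end Diagonal

/-- Eckart–Young theorem for the Frobenius norm: if `A = P D Qᵀ` is an SVD of `A`
(`P`, `Q` orthogonal, `D` rectangular-diagonal with nonnegative, non-increasing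
diagonal entries), then the hard-thresholded matrix `H_r(A) = P D_r Qᵀ`, where `D_r`
keeps the `r` largest diagonal entries of `D` and zeroes the rest, has rank at most
`r` and is a best rank-`r` approximation of `A` in the Frobenius norm. -/
theorem eckart_young_hard_thresholding
    (m n r : ℕ)
    (A : Matrix (Fin m) (Fin n) ℝ)
    (P : Matrix (Fin m) (Fin m) ℝ) (Q : Matrix (Fin n) (Fin n) ℝ)
    (D : Matrix (Fin m) (Fin n) ℝ)
    (hP : P ∈ Matrix.orthogonalGroup (Fin m) ℝ)
    (hQ : Q ∈ Matrix.orthogonalGroup (Fin n) ℝ)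
    (hDdiag : ∀ (i : Fin m) (j : Fin n), (i : ℕ) ≠ (j : ℕ) → D i j = 0)
    (hDnonneg : ∀ (i : Fin m) (j : Fin n), 0 ≤ D i j)
    (hDmono : ∀ (i i' : Fin m) (j j' : Fin n),
      (i : ℕ) = (j : ℕ) → (i' : ℕ) = (j' : ℕ) → (i : ℕ) ≤ (i' : ℕ) → D i' j' ≤ D i j)
    (hA : A = P * D * Qᵀ) :
    (P * (Matrix.of fun (i : Fin m) (j : Fin n) => if (i : ℕ) < r then D i j else 0) * Qᵀ).rank ≤ r ∧
    ∀ B : Matrix (Fin m) (Fin n) ℝ, B.rank ≤ r →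
      frobNorm (A - P * (Matrix.of fun (i : Fin m) (j : Fin n) => if (i : ℕ) < r then D i j else 0) * Qᵀ) ≤
        frobNorm (A - B) := by
  change (P * truncRows r D * Qᵀ).rank ≤ r ∧ ∀ B : Matrix (Fin m) (Fin n) ℝ, B.rank ≤ r →
    frobNorm (A - P * truncRows r D * Qᵀ) ≤ frobNorm (A - B)
  have hQt : Qᵀ ∈ orthogonalGroup (Fin n) ℝ := transpose_mem_unitaryGroup_iff.2 hQ
  have hconj : ∀ X : Matrix (Fin m) (Fin n) ℝ, A - P * X * Qᵀ = P * (D - X) * Qᵀ := fun X => by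
    rw [hA, Matrix.mul_sub, Matrix.sub_mul]
  refine ⟨?_, fun B hB => ?_⟩
  · calc (P * truncRows r D * Qᵀ).rank ≤ (truncRows r D).rank :=
          (rank_mul_le_left _ _).trans (rank_mul_le_right _ _)
      _ ≤ r := rank_truncRows_le r D
  · set B' := Pᵀ * B * Q
    have hBconj : B = P * B' * Qᵀ := by
      simp only [B', ← Matrix.mul_assoc, (mem_orthogonalGroup_iff _ _).1 hP, Matrix.one_mul]
      rw [Matrix.mul_assoc, (mem_orthogonalGroup_iff _ _).1 hQ, Matrix.mul_one]
    have hB' : B'.rank ≤ r := ((rank_mul_le_left _ _).trans (rank_mul_le_right _ _)).trans hB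
    rw [hconj, hBconj, hconj, frobNorm_mul_orthogonal hQt, frobNorm_orthogonal_mul hP,
      frobNorm_mul_orthogonal hQt, frobNorm_orthogonal_mul hP]
    exact frobNorm_sub_truncRows_le_of_rank_le hDdiag hDnonneg hDmono hB'
end

section
/- Let A₁ ∈ ℝ^{m×k} with rank(A₁) = k, A₂ ∈ ℝ^{m×(n−k)}, and let r ≥ k. Suppose M ∈ ℝ^{m×(n−k)} is any best rank-(r−k) Frobenius approximation of P⊥_{A₁}(A₂), i.e. rank(M) ≤ r−k and ‖P⊥_{A₁}(A₂) − M‖_F ≤ ‖P⊥_{A₁}(A₂) − N‖_F for all N with rank(N) ≤ r−k. Then B̃₂ := P_{A₁}(A₂) + M satisfies rank(A₁ B̃₂) ≤ r and ‖A₂ − B̃₂‖_F ≤ ‖A₂ − B₂‖_F for every B₂ with rank(A₁ B₂) ≤ r. (This is the SVD-free form of the Golub–Hoffman–Stewart theorem: the constrained problem (2) reduces to an unconstrained rank-(r−k) approximation of the projected residual.) -/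
open Matrix

/-!
Write `P` and `P⊥` for the columnwise orthogonal projections onto `col A₁` and its
complement. On `col (A₁ B₂) = col A₁ ⊔ col B₂` the projection onto `(col A₁)ᗮ` has kernel
`col A₁` and image `col (P⊥ B₂)`, so `rank (A₁ B₂) = rank A₁ + rank (P⊥ B₂)`. With
`rank A₁ = k` this makes `B̃₂` feasible (as `P⊥ B̃₂ = P⊥ M`), and turns every feasible `B₂`
into a competitor `P⊥ B₂` for `M`:
`‖A₂ - B̃₂‖ = ‖P⊥ A₂ - M‖ ≤ ‖P⊥ A₂ - P⊥ B₂‖ ≤ ‖A₂ - B₂‖`,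
the last step because `P⊥` is a contraction on each column.
-/

open Module Submodule Set

theorem Submodule.finrank_sup_eq_finrank_add_finrank_map_starProjection
    {𝕜 E : Type*} [RCLike 𝕜] [NormedAddCommGroup E] [InnerProductSpace 𝕜 E]
    (K T : Submodule 𝕜 E) [FiniteDimensional 𝕜 K] [FiniteDimensional 𝕜 T] :
    finrank 𝕜 ↥(K ⊔ T) =
      finrank 𝕜 K + finrank 𝕜 (T.map (Kᗮ.starProjection : E →ₗ[𝕜] E)) := by
  let f := Kᗮ.starProjection.toLinearMap ∘ₗ (K ⊔ T).subtype
  have hker : LinearMap.ker f = K.comap (K ⊔ T).subtype := by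
    simp [f, LinearMap.ker_comp]
  have hrange : LinearMap.range f = T.map (Kᗮ.starProjection : E →ₗ[𝕜] E) := by
    rw [LinearMap.range_comp, range_subtype, map_sup, LinearMap.le_ker_iff_map.mp, bot_sup_eq]
    exact fun v hv => starProjection_orthogonal_apply_eq_zero hv
  rw [← LinearMap.finrank_range_add_finrank_ker f, hker, hrange, add_comm]
  congr 1
  exact (comapSubtypeEquivOfLe le_sup_left).finrank_eq

noncomputable def eucCol {m n : Type*} (A : Matrix m n ℝ) (j : n) : EuclideanSpace ℝ m :=
  WithLp.toLp 2 (A.col j)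

section eucCol

variable {m n : Type*}

lemma eucCol_sub (A B : Matrix m n ℝ) (j : n) : eucCol (A - B) j = eucCol A j - eucCol B j := rfl

lemma eucCol_add (A B : Matrix m n ℝ) (j : n) : eucCol (A + B) j = eucCol A j + eucCol B j := rfl

lemma ext_eucCol {A B : Matrix m n ℝ} (h : ∀ j, eucCol A j = eucCol B j) : A = B :=
  Matrix.ext fun i j => congrArg (· i) (h j)

lemma eucCol_fromCols {k l : Type*} (A : Matrix m k ℝ) (B : Matrix m l ℝ) :
    eucCol (fromCols A B) = Sum.elim (eucCol A) (eucCol B) := by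
  ext (j | j) <;> rfl

lemma rank_eq_finrank_span_eucCol [Fintype m] [Fintype n] (A : Matrix m n ℝ) :
    A.rank = finrank ℝ (span ℝ (range (eucCol A))) := by
  rw [rank_eq_finrank_span_cols, ← (WithLp.linearEquiv 2 ℝ (m → ℝ)).symm.finrank_map_eq,
    map_span, ← range_comp]
  rfl

end eucCol

lemma colSpace_eq_span_eucCol {m k : ℕ} (A : Matrix (Fin m) (Fin k) ℝ) :
    colSpace A = span ℝ (range (eucCol A)) := by
  have : Matrix.toEuclideanLin A =
      (WithLp.linearEquiv 2 ℝ (Fin m → ℝ)).symm.toLinearMap ∘ₗ A.mulVecLin ∘ₗ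
        (WithLp.linearEquiv 2 ℝ (Fin k → ℝ)).toLinearMap := rfl
  rw [colSpace, this, LinearMap.range_comp, LinearMap.range_comp, LinearEquiv.range,
    Submodule.map_top, range_mulVecLin, map_span, ← range_comp]
  rfl

lemma rank_eq_finrank_colSpace {m k : ℕ} (A : Matrix (Fin m) (Fin k) ℝ) :
    A.rank = finrank ℝ (colSpace A) := by
  rw [colSpace_eq_span_eucCol, rank_eq_finrank_span_eucCol]

lemma frobNorm_eq_sqrt_sum_norm_eucCol_sq {m n : ℕ} (A : Matrix (Fin m) (Fin n) ℝ) :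
    frobNorm A = √(∑ j, ‖eucCol A j‖ ^ 2) := by
  simp only [frobNorm, EuclideanSpace.norm_sq_eq, Real.norm_eq_abs, sq_abs]
  rw [Finset.sum_comm]
  rfl

section proj

variable {m k l : ℕ} (A : Matrix (Fin m) (Fin k) ℝ)

lemma eucCol_projCols (X : Matrix (Fin m) (Fin l) ℝ) (j : Fin l) :
    eucCol (projCols A X) j = (colSpace A).starProjection (eucCol X j) := rfl

lemma eucCol_projOrthCols (X : Matrix (Fin m) (Fin l) ℝ) (j : Fin l) :
    eucCol (projOrthCols A X) j = (colSpace A)ᗮ.starProjection (eucCol X j) := rfl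

lemma projCols_add_projOrthCols (X : Matrix (Fin m) (Fin l) ℝ) :
    projCols A X + projOrthCols A X = X :=
  ext_eucCol fun _ => (colSpace A).starProjection_add_starProjection_orthogonal _

lemma projOrthCols_sub (X Y : Matrix (Fin m) (Fin l) ℝ) :
    projOrthCols A (X - Y) = projOrthCols A X - projOrthCols A Y :=
  ext_eucCol fun j => by
    rw [eucCol_projOrthCols, eucCol_sub, map_sub]
    rfl

lemma projOrthCols_projCols_add (X Y : Matrix (Fin m) (Fin l) ℝ) :
    projOrthCols A (projCols A X + Y) = projOrthCols A Y :=
  ext_eucCol fun j => by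
    rw [eucCol_projOrthCols, eucCol_add, map_add, eucCol_projCols,
      starProjection_orthogonal_apply_eq_zero (starProjection_apply_mem _ _), zero_add,
      eucCol_projOrthCols]

lemma sub_projCols_add (X Y : Matrix (Fin m) (Fin l) ℝ) :
    X - (projCols A X + Y) = projOrthCols A X - Y := by
  rw [← sub_sub, sub_eq_of_eq_add' (projCols_add_projOrthCols A X).symm]

lemma frobNorm_projOrthCols_le (X : Matrix (Fin m) (Fin l) ℝ) :
    frobNorm (projOrthCols A X) ≤ frobNorm X := by
  simp only [frobNorm_eq_sqrt_sum_norm_eucCol_sq, eucCol_projOrthCols]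
  gcongr
  exact norm_starProjection_apply_le _ _

lemma colSpace_projOrthCols (X : Matrix (Fin m) (Fin l) ℝ) :
    colSpace (projOrthCols A X) =
      (colSpace X).map ((colSpace A)ᗮ.starProjection : _ →ₗ[ℝ] _) := by
  rw [colSpace_eq_span_eucCol (projOrthCols A X), colSpace_eq_span_eucCol X, map_span,
    ← range_comp]
  rfl

lemma rank_projOrthCols_le (X : Matrix (Fin m) (Fin l) ℝ) :
    (projOrthCols A X).rank ≤ X.rank := by
  rw [rank_eq_finrank_colSpace, rank_eq_finrank_colSpace, colSpace_projOrthCols]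
  exact finrank_map_le _ _

lemma rank_fromCols_eq_rank_add_rank_projOrthCols (B : Matrix (Fin m) (Fin l) ℝ) :
    (fromCols A B).rank = A.rank + (projOrthCols A B).rank := by
  rw [rank_eq_finrank_span_eucCol, eucCol_fromCols, Sum.elim_range, span_union,
    ← colSpace_eq_span_eucCol, ← colSpace_eq_span_eucCol,
    finrank_sup_eq_finrank_add_finrank_map_starProjection, rank_eq_finrank_colSpace,
    rank_eq_finrank_colSpace, colSpace_projOrthCols]

end proj

/-- SVD-free form of the Golub–Hoffman–Stewart theorem: if `M` is any best
rank-`(r−k)` Frobenius approximation of `P⊥_{A₁}(A₂)`, then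
`B̃₂ := P_{A₁}(A₂) + M` is feasible and optimal for the constrained problem
`min ‖A₂ − B₂‖_F` over `rank (A₁ B₂) ≤ r`. -/
theorem ghs_svd_free
    (m k l r : ℕ) (hkr : k ≤ r)
    (A₁ : Matrix (Fin m) (Fin k) ℝ) (A₂ : Matrix (Fin m) (Fin l) ℝ)
    (hA₁ : A₁.rank = k)
    (M : Matrix (Fin m) (Fin l) ℝ)
    (hMrank : M.rank ≤ r - k)
    (hMbest : ∀ N : Matrix (Fin m) (Fin l) ℝ, N.rank ≤ r - k →
      frobNorm (projOrthCols A₁ A₂ - M) ≤ frobNorm (projOrthCols A₁ A₂ - N))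
    (B₂tilde : Matrix (Fin m) (Fin l) ℝ)
    (hB₂tilde : B₂tilde = projCols A₁ A₂ + M) :
    (Matrix.fromCols A₁ B₂tilde).rank ≤ r ∧
    ∀ B₂ : Matrix (Fin m) (Fin l) ℝ, (Matrix.fromCols A₁ B₂).rank ≤ r →
      frobNorm (A₂ - B₂tilde) ≤ frobNorm (A₂ - B₂) := by
  have hrank (B : Matrix (Fin m) (Fin l) ℝ) :
      (fromCols A₁ B).rank = k + (projOrthCols A₁ B).rank := by
    rw [rank_fromCols_eq_rank_add_rank_projOrthCols, hA₁]
  subst hB₂tilde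
  refine ⟨?_, fun B₂ hB₂ => ?_⟩
  · rw [hrank, projOrthCols_projCols_add]
    have := rank_projOrthCols_le A₁ M
    omega
  · calc frobNorm (A₂ - (projCols A₁ A₂ + M)) = frobNorm (projOrthCols A₁ A₂ - M) := by
          rw [sub_projCols_add]
      _ ≤ frobNorm (projOrthCols A₁ A₂ - projOrthCols A₁ B₂) :=
          hMbest _ (by rw [hrank] at hB₂; omega)
      _ = frobNorm (projOrthCols A₁ (A₂ - B₂)) := by rw [projOrthCols_sub]
      _ ≤ frobNorm (A₂ - B₂) := frobNorm_projOrthCols_le _ _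
end

section
/- Let X₁ ∈ ℝ^{m×k} with rank(X₁) = k and let k ≤ r. Then for a matrix X₂ ∈ ℝ^{m×(n−k)} the following are equivalent: (i) rank(X₁ X₂) ≤ r; (ii) there exist matrices C ∈ ℝ^{k×(n−k)}, B ∈ ℝ^{m×(r−k)}, and D ∈ ℝ^{(r−k)×(n−k)} such that X₂ = X₁ C + B D. (This is the parametrization of the feasible set of the rank-constrained weighted low-rank problem (7) used to derive the reduced problem (9).) -/
/-! The column space of `(X₁ X₂)` is `range X₁ ⊔ range X₂`. Since `range X₁` has dimension `k`,
it has a complement `W` inside this column space of dimension at most `r - k`, and `W` is the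
column space of some `B ∈ ℝ^{m×(r−k)}`. Every column of `X₂` then lies in the column space of
`(X₁ B)`, which is exactly `X₂ = X₁ C + B D`. Conversely such an `X₂` gives
`rank (X₁ X₂) ≤ rank (X₁ B) ≤ k + (r - k)`. -/

namespace Matrix

section CommSemiring

variable {R : Type*} [CommSemiring R] {m n l : Type*} [Fintype n] [Fintype l]

theorem range_mulVecLin_fromCols (A : Matrix m n R) (B : Matrix m l R) :
    LinearMap.range (fromCols A B).mulVecLin =
      LinearMap.range A.mulVecLin ⊔ LinearMap.range B.mulVecLin := by
  have hcol : (fromCols A B).col = Sum.elim A.col B.col := by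
    ext (j | j) i <;> rfl
  simp only [range_mulVecLin, hcol, Set.Sum.elim_range, Submodule.span_union]

theorem exists_eq_mul_of_range_mulVecLin_le {A : Matrix m l R} {M : Matrix m n R}
    (h : LinearMap.range A.mulVecLin ≤ LinearMap.range M.mulVecLin) :
    ∃ E : Matrix n l R, A = M * E := by
  have hcol : ∀ j, ∃ e, M *ᵥ e = A.col j := fun j =>
    h (by rw [range_mulVecLin]; exact Submodule.subset_span ⟨j, rfl⟩)
  choose e he using hcol
  exact ⟨(of e)ᵀ, by ext i j; simpa [mul_apply, mulVec, dotProduct] using (congrFun (he j) i).symm⟩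

end CommSemiring

section Field

variable {K : Type*} [Field K] {m n l : Type*} [Fintype n] [Fintype l]

theorem rank_fromCols_le (A : Matrix m n K) (B : Matrix m l K) :
    (fromCols A B).rank ≤ A.rank + B.rank := by
  rw [rank, range_mulVecLin_fromCols]
  exact Submodule.finrank_add_le_finrank_add_finrank _ _

variable [Fintype m]

theorem exists_range_mulVecLin_eq {p : ℕ} (W : Submodule K (m → K))
    (hW : Module.finrank K W ≤ p) :
    ∃ B : Matrix m (Fin p) K, LinearMap.range B.mulVecLin = W := by
  let L : (Fin p → K) →ₗ[K] (m → K) := W.subtype ∘ₗ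
    (Module.finBasis K W).equivFun.symm.toLinearMap ∘ₗ LinearMap.funLeft K K (Fin.castLE hW)
  have hL : LinearMap.range L = W := by
    rw [LinearMap.range_comp_of_range_eq_top _ (LinearMap.range_eq_top.mpr ?_),
      Submodule.range_subtype]
    exact (Module.finBasis K W).equivFun.symm.surjective.comp
      (LinearMap.funLeft_surjective_of_injective _ _ _ (Fin.castLE_injective hW))
  exact ⟨LinearMap.toMatrix' L, by rw [← Matrix.toLin'_apply', Matrix.toLin'_toMatrix', hL]⟩

theorem rank_fromCols_le_rank_add_iff (X₁ : Matrix m n K) (X₂ : Matrix m l K) (p : ℕ) :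
    (fromCols X₁ X₂).rank ≤ X₁.rank + p ↔
      ∃ (C : Matrix n l K) (B : Matrix m (Fin p) K) (D : Matrix (Fin p) l K),
        X₂ = X₁ * C + B * D := by
  constructor
  · intro h
    set U := LinearMap.range X₁.mulVecLin
    obtain ⟨W, hdisj, hsup⟩ := IsModularLattice.exists_disjoint_and_sup_eq
      (le_sup_left : U ≤ U ⊔ LinearMap.range X₂.mulVecLin)
    have hW : Module.finrank K W ≤ p := by
      have hsum := Submodule.finrank_sup_add_finrank_inf_eq U W
      rw [hdisj.eq_bot, finrank_bot, add_zero, hsup, ← range_mulVecLin_fromCols] at hsum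
      have : (fromCols X₁ X₂).rank = X₁.rank + Module.finrank K W := hsum
      omega
    obtain ⟨B, rfl⟩ := exists_range_mulVecLin_eq W hW
    obtain ⟨E, hE⟩ : ∃ E : Matrix (n ⊕ Fin p) l K, X₂ = fromCols X₁ B * E := by
      apply exists_eq_mul_of_range_mulVecLin_le
      rw [range_mulVecLin_fromCols, hsup]
      exact le_sup_right
    refine ⟨E.toRows₁, B, E.toRows₂, ?_⟩
    rw [hE, ← fromCols_mul_fromRows, fromRows_toRows]
  · rintro ⟨C, B, D, rfl⟩
    classical
    have hfac : fromCols X₁ (X₁ * C + B * D) = fromCols X₁ B * fromBlocks 1 C 0 D := by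
      simp [fromCols_mul_fromBlocks]
    calc (fromCols X₁ (X₁ * C + B * D)).rank
        ≤ (fromCols X₁ B).rank := hfac ▸ rank_mul_le_left _ _
      _ ≤ X₁.rank + B.rank := rank_fromCols_le X₁ B
      _ ≤ X₁.rank + p := by simpa using B.rank_le_card_width

end Field

end Matrix

/-- Parametrization of the feasible set of the rank-constrained problem: if
`rank X₁ = k ≤ r`, then `rank (X₁ X₂) ≤ r` iff `X₂ = X₁ C + B D` for some matrices
`C ∈ ℝ^{k×(n−k)}`, `B ∈ ℝ^{m×(r−k)}`, `D ∈ ℝ^{(r−k)×(n−k)}`. -/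
theorem rank_constraint_factorization
    (m k l r : ℕ) (hkr : k ≤ r)
    (X₁ : Matrix (Fin m) (Fin k) ℝ) (hX₁ : X₁.rank = k)
    (X₂ : Matrix (Fin m) (Fin l) ℝ) :
    (Matrix.fromCols X₁ X₂).rank ≤ r ↔
      ∃ (C : Matrix (Fin k) (Fin l) ℝ) (B : Matrix (Fin m) (Fin (r - k)) ℝ)
        (D : Matrix (Fin (r - k)) (Fin l) ℝ), X₂ = X₁ * C + B * D := by
  rw [← Matrix.rank_fromCols_le_rank_add_iff, hX₁, Nat.add_sub_cancel' hkr]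
end
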